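/- arXiv:2410.12658 — 2 statements merged into one kernel-verified Lean document; each statement's English description precedes it below -/
import Mathlib

section
/- Let n ≥ 2, d ≥ 1, let u : [n] → ℝ^d and c ∈ ℝ^d satisfy ⟪c, u_i⟫ < ⟪c, u_j⟫ for all i < j. If ω, ω′ ∈ ℝ^d are both generic and τ^ω(i) = τ^{ω′}(i) for all i < n, then A^ω = A^{ω′}. (The slope vector determines the max-slope arborescence.) -/
open scoped RealInnerProductSpace

/-- The slope `ρ^ω(i,j)` of the edge from vertex `u i` to vertex `u j`,
with respect to the objective direction `c`. -/
noncomputable def rho {n d : ℕ} (u : Fin n → EuclideanSpace ℝ (Fin d))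
    (c ω : EuclideanSpace ℝ (Fin d)) (i j : Fin n) : ℝ :=
  ⟪ω, u j - u i⟫ / ⟪c, u j - u i⟫

/-- `τ^ω(i)`: the maximal slope from vertex `i` to a later vertex
(the supremum of the finite set of slopes `ρ^ω(i,j)` for `i < j`;
it is meaningful for non-maximal `i`, where this set is nonempty). -/
noncomputable def tau {n d : ℕ} (u : Fin n → EuclideanSpace ℝ (Fin d))
    (c ω : EuclideanSpace ℝ (Fin d)) (i : Fin n) : ℝ :=
  sSup {x : ℝ | ∃ j : Fin n, i < j ∧ x = rho u c ω i j}

section Aux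

variable {n d : ℕ} {u : Fin n → EuclideanSpace ℝ (Fin d)}
  {c ω : EuclideanSpace ℝ (Fin d)}

lemma dpos (hc : ∀ i j : Fin n, i < j → ⟪c, u i⟫ < ⟪c, u j⟫)
    {i j : Fin n} (h : i < j) : 0 < ⟪c, u j - u i⟫ := by
  rw [inner_sub_right]; linarith [hc i j h]

lemma inner_split (ω : EuclideanSpace ℝ (Fin d)) (i k j : Fin n) :
    ⟪ω, u j - u i⟫ = ⟪ω, u k - u i⟫ + ⟪ω, u j - u k⟫ := by
  rw [← inner_add_right]; congr 1; abel

-- Lemma A: ρ(i,k) < ρ(i,j) → ρ(i,j) < ρ(k,j)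
lemma slopeA (hc : ∀ i j : Fin n, i < j → ⟪c, u i⟫ < ⟪c, u j⟫)
    {i k j : Fin n} (hik : i < k) (hkj : k < j)
    (h : rho u c ω i k < rho u c ω i j) : rho u c ω i j < rho u c ω k j := by
  have hq := dpos hc hik
  have hs := dpos hc hkj
  unfold rho at *
  rw [inner_split ω i k j, inner_split c i k j] at *
  set p := ⟪ω, u k - u i⟫
  set q := ⟪c, u k - u i⟫
  set r := ⟪ω, u j - u k⟫
  set s := ⟪c, u j - u k⟫
  rw [div_lt_div_iff₀ hq (by linarith)] at h
  rw [div_lt_div_iff₀ (by linarith) hs]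
  nlinarith

-- Lemma B: ρ(i,j) < ρ(i,k) → ρ(k,j) < ρ(i,k)
lemma slopeB (hc : ∀ i j : Fin n, i < j → ⟪c, u i⟫ < ⟪c, u j⟫)
    {i k j : Fin n} (hik : i < k) (hkj : k < j)
    (h : rho u c ω i j < rho u c ω i k) : rho u c ω k j < rho u c ω i k := by
  have hq := dpos hc hik
  have hs := dpos hc hkj
  unfold rho at *
  rw [inner_split ω i k j, inner_split c i k j] at *
  set p := ⟪ω, u k - u i⟫
  set q := ⟪c, u k - u i⟫
  set r := ⟪ω, u j - u k⟫
  set s := ⟪c, u j - u k⟫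
  rw [div_lt_div_iff₀ (by linarith) hq] at h
  rw [div_lt_div_iff₀ hs hq]
  nlinarith

lemma tauset_fin (i : Fin n) :
    {x : ℝ | ∃ j : Fin n, i < j ∧ x = rho u c ω i j}.Finite := by
  have : {x : ℝ | ∃ j : Fin n, i < j ∧ x = rho u c ω i j}
      ⊆ Set.range (rho u c ω i) := by
    rintro x ⟨j, _, rfl⟩; exact ⟨j, rfl⟩
  exact (Set.finite_range _).subset this

lemma tauset_ne (i : Fin n) (hi : (i : ℕ) + 1 < n) :
    {x : ℝ | ∃ j : Fin n, i < j ∧ x = rho u c ω i j}.Nonempty := by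
  refine ⟨rho u c ω i ⟨i + 1, hi⟩, ⟨i + 1, hi⟩, ?_, rfl⟩
  simp [Fin.lt_def]

lemma tau_mem (i : Fin n) (hi : (i : ℕ) + 1 < n) :
    ∃ j : Fin n, i < j ∧ tau u c ω i = rho u c ω i j :=
  (tauset_ne i hi).csSup_mem (tauset_fin i)

lemma rho_le_tau {i j : Fin n} (h : i < j) :
    rho u c ω i j ≤ tau u c ω i :=
  le_csSup (tauset_fin i).bddAbove ⟨j, h, rfl⟩

end Aux

/-- `ω` is generic: for each non-maximal vertex `i` there is a unique `j > i`
whose slope attains the maximal slope `τ^ω(i)`. -/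
def Generic {n d : ℕ} (u : Fin n → EuclideanSpace ℝ (Fin d))
    (c ω : EuclideanSpace ℝ (Fin d)) : Prop :=
  ∀ i : Fin n, (i : ℕ) + 1 < n →
    ∃! j : Fin n, i < j ∧ rho u c ω i j = tau u c ω i

/-- `A` is the max-slope arborescence `A^ω`: it fixes the maximal vertex, and
sends every other vertex `i` to an improving neighbour attaining `τ^ω(i)`. -/
def IsArbo {n d : ℕ} (u : Fin n → EuclideanSpace ℝ (Fin d))
    (c ω : EuclideanSpace ℝ (Fin d)) (A : Fin n → Fin n) : Prop :=
  (∀ i : Fin n, (i : ℕ) + 1 = n → A i = i) ∧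
  (∀ i : Fin n, (i : ℕ) + 1 < n →
    i < A i ∧ rho u c ω i (A i) = tau u c ω i)

lemma no_lt {n d : ℕ} {u : Fin n → EuclideanSpace ℝ (Fin d)}
    {c ω ω' : EuclideanSpace ℝ (Fin d)}
    (hc : ∀ i j : Fin n, i < j → ⟪c, u i⟫ < ⟪c, u j⟫)
    (hω : Generic u c ω) (hω' : Generic u c ω')
    (htau : ∀ i : Fin n, (i : ℕ) + 1 < n → tau u c ω i = tau u c ω' i)
    {A A' : Fin n → Fin n} (hA : IsArbo u c ω A) (hA' : IsArbo u c ω' A')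
    (i : Fin n) (hi : (i : ℕ) + 1 < n) : ¬ A i < A' i := by
  intro hlt
  set j := A i with hj
  set j' := A' i with hj'
  obtain ⟨hij, hρ⟩ := hA.2 i hi
  obtain ⟨hij', hρ'⟩ := hA'.2 i hi
  have hjn : (j : ℕ) + 1 < n := lt_of_le_of_lt (Nat.succ_le_of_lt hlt) j'.isLt
  -- Step 1: tau ω' j > tau ω' i
  obtain ⟨w', hw', huniq'⟩ := hω' i hi
  have hjw' : j' = w' := huniq' j' ⟨hij', hρ'⟩
  have h1 : rho u c ω' i j < rho u c ω' i j' := by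
    refine lt_of_le_of_ne (le_trans (rho_le_tau hij) (le_of_eq hρ'.symm)) ?_
    intro heq
    exact absurd (huniq' j ⟨hij, heq.trans hρ'⟩ ▸ hjw') hlt.ne'
  have h2 : rho u c ω' i j' < rho u c ω' j j' := slopeA hc hij hlt h1
  have h3 : tau u c ω' i < tau u c ω' j :=
    lt_of_lt_of_le (hρ' ▸ h2) (rho_le_tau hlt)
  -- Step 2: tau ω j < tau ω i
  obtain ⟨w, hw, huniq⟩ := hω i hi
  have hjw : j = w := huniq j ⟨hij, hρ⟩
  obtain ⟨m, hjm, hτj⟩ := tau_mem (ω := ω) j hjn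
  have him : i < m := hij.trans hjm
  have h4 : rho u c ω i m < rho u c ω i j := by
    refine lt_of_le_of_ne (le_trans (rho_le_tau him) (le_of_eq hρ.symm)) ?_
    intro heq
    exact absurd ((huniq m ⟨him, heq.trans hρ⟩).trans hjw.symm) hjm.ne'
  have h5 : rho u c ω j m < rho u c ω i j := slopeB hc hij hjm h4
  have h6 : tau u c ω j < tau u c ω i := by rw [hτj, ← hρ] at *; exact h5
  have e1 := htau i hi
  have e2 := htau j hjn
  linarith

/-- the slope vector `(τ^ω(i))_{i < n}` determines the
max-slope arborescence. -/
theorem arbo_determined_by_tau (n d : ℕ) (hn : 2 ≤ n) (hd : 1 ≤ d)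
    (u : Fin n → EuclideanSpace ℝ (Fin d)) (c : EuclideanSpace ℝ (Fin d))
    (hc : ∀ i j : Fin n, i < j → ⟪c, u i⟫ < ⟪c, u j⟫)
    (ω ω' : EuclideanSpace ℝ (Fin d)) (hω : Generic u c ω) (hω' : Generic u c ω')
    (htau : ∀ i : Fin n, (i : ℕ) + 1 < n → tau u c ω i = tau u c ω' i)
    (A A' : Fin n → Fin n) (hA : IsArbo u c ω A) (hA' : IsArbo u c ω' A') :
    A = A' := by
  funext i
  rcases eq_or_lt_of_le (Nat.succ_le_of_lt i.isLt) with h | h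
  · rw [hA.1 i h, hA'.1 i h]
  · have h1 := no_lt hc hω hω' htau hA hA' i h
    have h2 := no_lt hc hω' hω (fun k hk => (htau k hk).symm) hA' hA i h
    exact le_antisymm (not_lt.mp h2) (not_lt.mp h1)
end

section
/- Let m ≥ 1, let u : [m+1] → ℝ^m be affinely independent (a full-dimensional simplex in ℝ^m) and let c ∈ ℝ^m satisfy ⟪c, u_i⟫ < ⟪c, u_j⟫ for all i < j. Then the number of distinct max-slope arborescences, i.e. the cardinality of the set {A : [m+1] → [m+1] | there exists a generic ω ∈ ℝ^m with A = A^ω}, equals the Catalan number catalan(m). -/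
open scoped RealInnerProductSpace

/-!
Write `f i = ⟪c, u i⟫` and `g i = ⟪ω, u i⟫`. Then `ρ^ω(i, j)` is the slope between the points
`(f i, g i)` and `(f j, g j)` of the plane, whose abscissae increase with `i`, and since the `u i`
are affinely independent every height function `g` comes from some `ω`. The three-slope
inequality shows that a max-slope map `a` is non-crossing: `i < j < a i` forces `a j ≤ a i`.
Conversely every non-crossing map is a max-slope map: realize it on the vertices `1, …, m`
and put vertex `0` on a line through `a 0` that separates the earlier vertices from the later
ones. Cutting a non-crossing map at `a 0` into the blocks `1, …, a 0` and `a 0, …, m` gives the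
Catalan recurrence.
-/

theorem AffineIndependent.exists_inner_sub_eq {ι E : Type*} [NormedAddCommGroup E]
    [InnerProductSpace ℝ E] [FiniteDimensional ℝ E] {u : ι → E}
    (hu : AffineIndependent ℝ u) (g : ι → ℝ) :
    ∃ ω : E, ∀ i j, ⟪ω, u j - u i⟫ = g j - g i := by
  rcases isEmpty_or_nonempty ι with hι | ⟨⟨i₀⟩⟩
  · exact ⟨0, fun i => isEmptyElim i⟩
  have hli := (affineIndependent_iff_linearIndependent_vsub ℝ u i₀).1 hu
  obtain ⟨φ, hφ⟩ := LinearMap.exists_extend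
    ((Module.Basis.span hli).constr ℝ fun j => g j - g i₀)
  set ω := (InnerProductSpace.toDual ℝ E).symm (LinearMap.toContinuousLinearMap φ)
  have hω : ∀ j, ⟪ω, u j - u i₀⟫ = g j - g i₀ := by
    intro j
    by_cases hj : j = i₀
    · simp [hj]
    · have := LinearMap.congr_fun hφ (Module.Basis.span hli ⟨j, hj⟩)
      rw [LinearMap.comp_apply, Module.Basis.constr_basis] at this
      simpa [ω, InnerProductSpace.toDual_symm_apply, Module.Basis.span_apply] using this
  refine ⟨ω, fun i j => ?_⟩
  rw [show u j - u i = (u j - u i₀) - (u i - u i₀) by abel, inner_sub_right, hω, hω]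
  ring

namespace MaxSlope

section ThreeSlopes

variable {ι : Type*} (f g : ι → ℝ)

noncomputable def edgeSlope (i j : ι) : ℝ :=
  (g j - g i) / (f j - f i)

variable {f} {p q r : ι}

theorem edgeSlope_sub_edgeSlope_left (hpq : f p < f q) (hqr : f q < f r) :
    edgeSlope f g p q - edgeSlope f g p r =
      (f r - f q) / (f r - f p) * (edgeSlope f g p q - edgeSlope f g q r) := by
  have : f q - f p ≠ 0 := by linarith
  have : f r - f q ≠ 0 := by linarith
  have : f r - f p ≠ 0 := by linarith
  simp only [edgeSlope]
  field_simp
  ring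

theorem edgeSlope_sub_edgeSlope_right (hpq : f p < f q) (hqr : f q < f r) :
    edgeSlope f g p r - edgeSlope f g q r =
      (f q - f p) / (f r - f p) * (edgeSlope f g p q - edgeSlope f g q r) := by
  have : f q - f p ≠ 0 := by linarith
  have : f r - f q ≠ 0 := by linarith
  have : f r - f p ≠ 0 := by linarith
  simp only [edgeSlope]
  field_simp
  ring

theorem edgeSlope_left_lt_outer_iff_outer_lt_right (hpq : f p < f q) (hqr : f q < f r) :
    edgeSlope f g p q < edgeSlope f g p r ↔ edgeSlope f g p r < edgeSlope f g q r := by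
  have := edgeSlope_sub_edgeSlope_left g hpq hqr
  have := edgeSlope_sub_edgeSlope_right g hpq hqr
  have : 0 < (f r - f q) / (f r - f p) := div_pos (by linarith) (by linarith)
  have : 0 < (f q - f p) / (f r - f p) := div_pos (by linarith) (by linarith)
  constructor <;> intro h <;> nlinarith

theorem edgeSlope_outer_lt_left_iff_right_lt_outer (hpq : f p < f q) (hqr : f q < f r) :
    edgeSlope f g p r < edgeSlope f g p q ↔ edgeSlope f g q r < edgeSlope f g p r := by
  have := edgeSlope_sub_edgeSlope_left g hpq hqr
  have := edgeSlope_sub_edgeSlope_right g hpq hqr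
  have : 0 < (f r - f q) / (f r - f p) := div_pos (by linarith) (by linarith)
  have : 0 < (f q - f p) / (f r - f p) := div_pos (by linarith) (by linarith)
  constructor <;> intro h <;> nlinarith

theorem edgeSlope_outer_lt_left_iff_right_lt_left (hpq : f p < f q) (hqr : f q < f r) :
    edgeSlope f g p r < edgeSlope f g p q ↔ edgeSlope f g q r < edgeSlope f g p q := by
  have := edgeSlope_sub_edgeSlope_left g hpq hqr
  have : 0 < (f r - f q) / (f r - f p) := div_pos (by linarith) (by linarith)
  constructor <;> intro h <;> nlinarith

end ThreeSlopes

variable {n : ℕ}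

def IsMaxSlope (f g : Fin n → ℝ) (a : Fin n → Fin n) : Prop :=
  ∀ i : Fin n, (i : ℕ) + 1 < n →
    i < a i ∧ ∀ j, i < j → j ≠ a i → edgeSlope f g i j < edgeSlope f g i (a i)

structure IsNonCrossing (a : Fin n → Fin n) : Prop where
  apply_of_last : ∀ i : Fin n, (i : ℕ) + 1 = n → a i = i
  lt_apply : ∀ i : Fin n, (i : ℕ) + 1 < n → i < a i
  apply_le_apply : ∀ i j : Fin n, i < j → j < a i → a j ≤ a i

instance : DecidablePred (IsNonCrossing (n := n)) := fun _ =>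
  decidable_of_iff (_ ∧ _ ∧ _) ⟨fun ⟨h₁, h₂, h₃⟩ => ⟨h₁, h₂, h₃⟩, fun h => ⟨h.1, h.2, h.3⟩⟩

theorem IsNonCrossing.le_apply {a : Fin n → Fin n} (ha : IsNonCrossing a) (i : Fin n) :
    i ≤ a i := by
  rcases Nat.lt_or_ge ((i : ℕ) + 1) n with hi | hi
  · exact (ha.lt_apply i hi).le
  · exact (ha.apply_of_last i (by omega)).ge

theorem IsNonCrossing.val_apply_mk_of_last {a : Fin n → Fin n} (ha : IsNonCrossing a) {i : ℕ}
    (hi : i + 1 = n) : (a ⟨i, by omega⟩ : ℕ) = i :=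
  congrArg Fin.val (ha.apply_of_last ⟨i, by omega⟩ hi)

theorem IsNonCrossing.lt_val_apply_mk {a : Fin n → Fin n} (ha : IsNonCrossing a) {i : ℕ}
    (hi : i + 1 < n) : i < a ⟨i, by omega⟩ :=
  ha.lt_apply ⟨i, by omega⟩ hi

theorem IsNonCrossing.le_val_apply_mk {a : Fin n → Fin n} (ha : IsNonCrossing a) {i : ℕ}
    (hi : i < n) : i ≤ a ⟨i, hi⟩ :=
  ha.le_apply ⟨i, hi⟩

theorem IsNonCrossing.val_apply_mk_le {a : Fin n → Fin n} (ha : IsNonCrossing a) {i j : ℕ}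
    (hj : j < n) (hij : i < j) (hja : j < a ⟨i, by omega⟩) : (a ⟨j, hj⟩ : ℕ) ≤ a ⟨i, by omega⟩ :=
  ha.apply_le_apply ⟨i, by omega⟩ ⟨j, hj⟩ hij hja

section MaxSlopeMaps

variable {f g : Fin n → ℝ} {a : Fin n → Fin n}

theorem IsMaxSlope.isNonCrossing (hf : StrictMono f) (ha : IsMaxSlope f g a)
    (hlast : ∀ i : Fin n, (i : ℕ) + 1 = n → a i = i) : IsNonCrossing a where
  apply_of_last := hlast
  lt_apply i hi := (ha i hi).1
  apply_le_apply i j hij hja := by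
    by_contra! hcross
    have hi : (i : ℕ) + 1 < n := by have := (a i).isLt; omega
    have hj : (j : ℕ) + 1 < n := by have := (a j).isLt; omega
    have h₁ := (ha i hi).2 j hij hja.ne
    have h₂ := (ha i hi).2 (a j) (hij.trans (hja.trans hcross)) hcross.ne'
    have h₃ := (ha j hj).2 (a i) hja hcross.ne
    have c₁ := (edgeSlope_left_lt_outer_iff_outer_lt_right g (hf hij) (hf hja)).1 h₁
    have c₂ := (edgeSlope_outer_lt_left_iff_right_lt_outer g (hf (hij.trans hja)) (hf hcross)).1 h₂
    have c₃ := (edgeSlope_left_lt_outer_iff_outer_lt_right g (hf hja) (hf hcross)).1 h₃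
    linarith

-- `hchain` says that the max-slope path from `j` passes through `k`.
theorem IsMaxSlope.edgeSlope_lt_of_forall_apply_le (hf : StrictMono f) (ha : IsMaxSlope f g a)
    {k : Fin n} (j : Fin n) (hjk : j < k) (hchain : ∀ i, j ≤ i → i < k → a i ≤ k)
    {t : Fin n} (hkt : k < t) : edgeSlope f g k t < edgeSlope f g j k := by
  induction j using WellFoundedGT.induction with
  | _ j ih =>
  have hj : (j : ℕ) + 1 < n := by have := t.isLt; omega
  obtain ⟨hjJ, hmax⟩ := ha j hj
  rcases (hchain j le_rfl hjk).lt_or_eq with hJk | hJk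
  · have := ih (a j) hjJ hJk (fun i hJi hik => hchain i (hjJ.le.trans hJi) hik)
    have := (edgeSlope_outer_lt_left_iff_right_lt_outer g (hf hjJ) (hf hJk)).1 (hmax k hjk hJk.ne')
    linarith
  · have h := hmax t (hjk.trans hkt) (hJk ▸ hkt.ne')
    rw [hJk] at h
    have := (edgeSlope_outer_lt_left_iff_right_lt_outer g (hf hjk) (hf hkt)).1 h
    linarith

theorem IsMaxSlope.exists_slope_between (hf : StrictMono f) (ha : IsMaxSlope f g a) (k : Fin n)
    (hk : ∀ i, i < k → a i ≤ k) :
    ∃ s, (∀ t, k < t → edgeSlope f g k t < s) ∧ ∀ j, j < k → s < edgeSlope f g j k := by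
  obtain ⟨s, hks, hsk⟩ := Finset.exists_between'
    (({t | k < t} : Finset (Fin n)).image (edgeSlope f g k))
    (({j | j < k} : Finset (Fin n)).image (fun j => edgeSlope f g j k))
    (by
      simp only [Finset.mem_image, Finset.mem_filter, Finset.mem_univ, true_and]
      rintro _ ⟨t, hkt, rfl⟩ _ ⟨j, hjk, rfl⟩
      exact ha.edgeSlope_lt_of_forall_apply_le hf j hjk (fun i _ hik => hk i hik) hkt)
  simp only [Finset.mem_image, Finset.mem_filter, Finset.mem_univ, true_and,
    forall_exists_index, and_imp, forall_apply_eq_imp_iff₂] at hks hsk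
  exact ⟨s, hks, hsk⟩

theorem IsMaxSlope.exists_cons {f : Fin (n + 1) → ℝ} (hf : StrictMono f) {g : Fin n → ℝ}
    {a : Fin n → Fin n} (ha : IsMaxSlope (fun i => f i.succ) g a) (k : Fin n)
    (hk : ∀ i, i < k → a i ≤ k) :
    ∃ y, IsMaxSlope f (Fin.cons y g) (Fin.cons k.succ fun i => (a i).succ) := by
  obtain ⟨s, hks, hsk⟩ :=
    ha.exists_slope_between (f := fun i => f i.succ) (hf.comp Fin.strictMono_succ) k hk
  -- Vertex `0` goes on the line of slope `s` through vertex `k + 1`: the later vertices lie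
  -- below it since their slopes from `k + 1` are `< s`, the earlier ones since their slopes
  -- to `k + 1` are `> s`.
  refine ⟨g k - s * (f k.succ - f 0), ?_⟩
  set G : Fin (n + 1) → ℝ := Fin.cons (g k - s * (f k.succ - f 0)) g
  have hsucc : ∀ i j, edgeSlope f G i.succ j.succ = edgeSlope (fun i => f i.succ) g i j := by
    intro i j; simp [G, edgeSlope]
  have hzero : edgeSlope f G 0 k.succ = s := by
    have : f k.succ - f 0 ≠ 0 := (sub_pos.2 (hf k.succ_pos)).ne'
    simp only [edgeSlope, Fin.cons_succ, Fin.cons_zero, sub_sub_cancel, G]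
    field_simp
  intro i hi
  cases i using Fin.cases with
  | zero =>
    refine ⟨k.succ_pos, fun j h0j hjk => ?_⟩
    obtain ⟨j, rfl⟩ := Fin.exists_succ_eq.2 h0j.ne'
    simp only [Fin.cons_zero] at hjk ⊢
    rcases lt_or_gt_of_ne (Fin.succ_injective _ |>.ne_iff.1 hjk) with hjk | hkj
    · have h := hsk j hjk
      rw [← hzero, ← hsucc] at h
      exact (edgeSlope_left_lt_outer_iff_outer_lt_right G (hf h0j)
        (hf (Fin.succ_lt_succ_iff.2 hjk))).2 h
    · have h := hks j hkj
      rw [← hzero, ← hsucc] at h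
      exact (edgeSlope_outer_lt_left_iff_right_lt_left G (hf k.succ_pos)
        (hf (Fin.succ_lt_succ_iff.2 hkj))).2 h
  | succ i =>
    obtain ⟨hia, hmax⟩ := ha i (by simpa using hi)
    refine ⟨by simpa using hia, fun j hij hja => ?_⟩
    obtain ⟨j, rfl⟩ := Fin.exists_succ_eq.2 (Fin.succ_pos i |>.trans hij).ne'
    simp only [Fin.cons_succ, hsucc] at hja ⊢
    exact hmax j (Fin.succ_lt_succ_iff.1 hij) (fun h => hja (h ▸ rfl))

end MaxSlopeMaps

-- The map induced on the vertices `lo, …, lo + len - 1`, renumbered from `0`; the `min` only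
-- matters at the last vertex of the block, whose image may leave the block.
def restrictBlock {N : ℕ} (a : Fin N → Fin N) (lo len : ℕ) (h : lo + len ≤ N) (t : Fin len) :
    Fin len :=
  ⟨min ((a ⟨t + lo, by omega⟩ : ℕ) - lo) (len - 1), by have := t.isLt; omega⟩

theorem restrictBlock_val {N : ℕ} (a : Fin N → Fin N) (lo len : ℕ) (h : lo + len ≤ N)
    (t : Fin len) :
    (restrictBlock a lo len h t : ℕ) = min ((a ⟨t + lo, by omega⟩ : ℕ) - lo) (len - 1) :=
  rfl

theorem isNonCrossing_restrictBlock {N : ℕ} {a : Fin N → Fin N} (ha : IsNonCrossing a)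
    (lo len : ℕ) (h : lo + len ≤ N)
    (hblock : ∀ i : Fin N, lo ≤ i → (i : ℕ) + 1 < lo + len → (a i : ℕ) < lo + len) :
    IsNonCrossing (restrictBlock a lo len h) := by
  have hlt : ∀ t : Fin len, (t : ℕ) + 1 < len → (a ⟨t + lo, by omega⟩ : ℕ) < lo + len :=
    fun t ht => hblock ⟨t + lo, by omega⟩ (by simp only; omega) (by simp only; omega)
  refine ⟨fun t ht => ?_, fun t ht => ?_, fun s t hst hts => ?_⟩
  · have := ha.le_val_apply_mk (i := t + lo) (by omega)
    rw [Fin.ext_iff, restrictBlock_val]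
    omega
  · have := ha.lt_val_apply_mk (i := t + lo) (by omega)
    have := hlt t ht
    rw [Fin.lt_def, restrictBlock_val]
    omega
  · rw [Fin.lt_def] at hst
    rw [Fin.lt_def, restrictBlock_val] at hts
    have := hlt s (by omega)
    have := ha.val_apply_mk_le (i := s + lo) (j := t + lo) (by omega) (by omega) (by omega)
    rw [Fin.le_def, restrictBlock_val, restrictBlock_val]
    omega

theorem IsNonCrossing.exists_isMaxSlope : ∀ {n : ℕ} {f : Fin n → ℝ}, StrictMono f →
    ∀ {a : Fin n → Fin n}, IsNonCrossing a → ∃ g, IsMaxSlope f g a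
  | 0, _, _, _, _ => ⟨0, fun i => i.elim0⟩
  | n + 1, f, hf, a, ha => by
    rcases Nat.eq_zero_or_pos n with rfl | hn
    · exact ⟨0, fun i hi => by omega⟩
    have h0 : a 0 ≠ 0 := (ha.lt_apply 0 (by simp only [Fin.val_zero]; omega)).ne'
    have hsplit : a = Fin.cons ((a 0).pred h0).succ
        fun i => (restrictBlock a 1 n (by omega) i).succ := by
      funext j
      cases j using Fin.cases with
      | zero => simp
      | succ i =>
        have h₁ := ha.le_apply i.succ
        have h₂ := (a i.succ).isLt
        rw [Fin.le_def, Fin.val_succ] at h₁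
        rw [Fin.cons_succ, Fin.ext_iff, Fin.val_succ, restrictBlock_val,
          show (⟨i + 1, by omega⟩ : Fin (n + 1)) = i.succ from rfl]
        omega
    have ha' := isNonCrossing_restrictBlock ha 1 n (by omega) fun i _ _ => by omega
    obtain ⟨g, hg⟩ := ha'.exists_isMaxSlope (hf.comp Fin.strictMono_succ)
    obtain ⟨y, hy⟩ := hg.exists_cons hf ((a 0).pred h0) fun i hi => by
      have := ha.apply_le_apply 0 i.succ i.succ_pos (by
        rw [← Fin.succ_lt_succ_iff, Fin.succ_pred] at hi; exact hi)
      rw [Fin.le_def] at this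
      rw [Fin.le_def, restrictBlock_val, Fin.val_pred,
        show (⟨i + 1, by omega⟩ : Fin (n + 1)) = i.succ from rfl]
      omega
    exact ⟨Fin.cons y g, hsplit ▸ hy⟩

section Glue

variable {N k l : ℕ} (h : k + l + 2 = N)

-- Inverse to cutting a non-crossing map with `a 0 = k + 1` into its blocks on the vertices
-- `1, …, k + 1` and `k + 1, …, N - 1`.
def glue (b : Fin (k + 1) → Fin (k + 1)) (c : Fin (l + 1) → Fin (l + 1)) (j : Fin N) : Fin N :=
  if (j : ℕ) = 0 then ⟨k + 1, by omega⟩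
  else if hk : (j : ℕ) ≤ k then
    ⟨b ⟨j - 1, by omega⟩ + 1, by have := (b ⟨j - 1, by omega⟩).isLt; omega⟩
  else
    ⟨c ⟨j - (k + 1), by omega⟩ + (k + 1), by have := (c ⟨j - (k + 1), by omega⟩).isLt; omega⟩

variable (b : Fin (k + 1) → Fin (k + 1)) (c : Fin (l + 1) → Fin (l + 1))

theorem glue_val_of_eq_zero {j : Fin N} (hj : (j : ℕ) = 0) : (glue h b c j : ℕ) = k + 1 := by
  simp [glue, hj]

theorem glue_val_of_le {j : Fin N} (hj : 0 < (j : ℕ)) (hjk : (j : ℕ) ≤ k) :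
    (glue h b c j : ℕ) = b ⟨j - 1, by omega⟩ + 1 := by
  simp [glue, hj.ne', hjk]

theorem glue_val_of_lt {j : Fin N} (hkj : k < (j : ℕ)) :
    (glue h b c j : ℕ) = c ⟨j - (k + 1), by omega⟩ + (k + 1) := by
  simp [glue, show (j : ℕ) ≠ 0 by omega, show ¬(j : ℕ) ≤ k by omega]

theorem isNonCrossing_glue (hb : IsNonCrossing b) (hc : IsNonCrossing c) :
    IsNonCrossing (glue h b c) := by
  refine ⟨fun j hj => ?_, fun j hj => ?_, fun i j hij hji => ?_⟩
  · have := hc.val_apply_mk_of_last (i := j - (k + 1)) (by omega)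
    rw [Fin.ext_iff, glue_val_of_lt h b c (by omega)]
    omega
  · rw [Fin.lt_def]
    rcases Nat.eq_zero_or_pos (j : ℕ) with hj₀ | hj₀
    · rw [glue_val_of_eq_zero h b c hj₀]
      omega
    rcases le_or_gt (j : ℕ) k with hjk | hkj
    · have := hb.lt_val_apply_mk (i := j - 1) (by omega)
      rw [glue_val_of_le h b c hj₀ hjk]
      omega
    · have := hc.lt_val_apply_mk (i := j - (k + 1)) (by omega)
      rw [glue_val_of_lt h b c hkj]
      omega
  · rw [Fin.lt_def] at hij hji
    rw [Fin.le_def]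
    rcases Nat.eq_zero_or_pos (i : ℕ) with hi₀ | hi₀
    · rw [glue_val_of_eq_zero h b c hi₀] at hji
      have := (b ⟨j - 1, by omega⟩).isLt
      rw [glue_val_of_eq_zero h b c hi₀, glue_val_of_le h b c (by omega) (by omega)]
      omega
    rcases le_or_gt (i : ℕ) k with hik | hki
    · rw [glue_val_of_le h b c hi₀ hik] at hji
      have := hb.val_apply_mk_le (i := i - 1) (j := j - 1) (by omega) (by omega) (by omega)
      rw [glue_val_of_le h b c hi₀ hik, glue_val_of_le h b c (by omega) (by omega)]
      omega
    · rw [glue_val_of_lt h b c hki] at hji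
      have := hc.val_apply_mk_le (i := i - (k + 1)) (j := j - (k + 1)) (by omega) (by omega)
        (by omega)
      rw [glue_val_of_lt h b c hki, glue_val_of_lt h b c (by omega)]
      omega

theorem restrictBlock_glue_left (hb : IsNonCrossing b) :
    restrictBlock (glue h b c) 1 (k + 1) (by omega) = b := by
  funext t
  have := (b t).isLt
  rw [Fin.ext_iff, restrictBlock_val]
  rcases lt_or_eq_of_le (Nat.le_of_lt_succ t.isLt) with htk | htk
  · rw [glue_val_of_le h b c (by simp) (by simp only; omega)]
    simp only [Nat.add_sub_cancel, Fin.eta]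
    omega
  · have := Fin.ext_iff.1 (hb.apply_of_last t (by omega))
    rw [glue_val_of_lt h b c (by simp only; omega)]
    omega

theorem restrictBlock_glue_right : restrictBlock (glue h b c) (k + 1) (l + 1) (by omega) = c := by
  funext t
  have := (c t).isLt
  rw [Fin.ext_iff, restrictBlock_val, glue_val_of_lt h b c (by simp only; omega)]
  simp only [Nat.add_sub_cancel, Fin.eta]
  omega

end Glue

theorem IsNonCrossing.glue_restrictBlock {N k l : ℕ} (h : k + l + 2 = N) {a : Fin N → Fin N}
    (ha : IsNonCrossing a) (ha₀ : (a ⟨0, by omega⟩ : ℕ) = k + 1) :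
    glue h (restrictBlock a 1 (k + 1) (by omega)) (restrictBlock a (k + 1) (l + 1) (by omega)) =
      a := by
  funext j
  have hj := ha.le_apply j
  have := (a j).isLt
  rw [Fin.le_def] at hj
  rw [Fin.ext_iff]
  rcases Nat.eq_zero_or_pos (j : ℕ) with hj₀ | hj₀
  · rw [glue_val_of_eq_zero h _ _ hj₀, ← ha₀, show j = ⟨0, by omega⟩ from Fin.ext hj₀]
  rcases le_or_gt (j : ℕ) k with hjk | hkj
  · have := ha.apply_le_apply ⟨0, by omega⟩ j (by rw [Fin.lt_def]; simp only; omega)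
      (by rw [Fin.lt_def]; omega)
    rw [Fin.le_def, ha₀] at this
    rw [glue_val_of_le h _ _ hj₀ hjk, restrictBlock_val]
    simp only [Nat.sub_add_cancel hj₀, Fin.eta]
    omega
  · rw [glue_val_of_lt h _ _ hkj, restrictBlock_val]
    simp only [Nat.sub_add_cancel hkj, Fin.eta]
    omega

section Counting

open Finset

theorem card_isNonCrossing_of_apply_zero {N k l : ℕ} (h : k + l + 2 = N) :
    #{a : Fin N → Fin N | IsNonCrossing a ∧ (a ⟨0, by omega⟩ : ℕ) = k + 1} =
      #{b : Fin (k + 1) → Fin (k + 1) | IsNonCrossing b} *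
        #{c : Fin (l + 1) → Fin (l + 1) | IsNonCrossing c} := by
  rw [← card_product]
  refine card_nbij'
    (fun a => (restrictBlock a 1 (k + 1) (by omega), restrictBlock a (k + 1) (l + 1) (by omega)))
    (fun p => glue h p.1 p.2) (fun a ha => ?_) (fun p hp => ?_) (fun a ha => ?_) (fun p hp => ?_)
  · simp only [coe_filter, Set.mem_ofPred_eq, mem_univ, true_and, coe_product,
      Set.mem_prod] at ha ⊢
    refine ⟨isNonCrossing_restrictBlock ha.1 _ _ _ fun i hi hik => ?_,
      isNonCrossing_restrictBlock ha.1 _ _ _ fun i _ _ => by omega⟩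
    have := ha.1.apply_le_apply ⟨0, by omega⟩ i (by rw [Fin.lt_def]; simp only; omega)
      (by rw [Fin.lt_def]; omega)
    rw [Fin.le_def] at this
    omega
  · simp only [coe_filter, Set.mem_ofPred_eq, mem_univ, true_and, coe_product,
      Set.mem_prod] at hp ⊢
    exact ⟨isNonCrossing_glue h _ _ hp.1 hp.2, glue_val_of_eq_zero h _ _ rfl⟩
  · simp only [coe_filter, Set.mem_ofPred_eq, mem_univ, true_and] at ha
    exact ha.1.glue_restrictBlock h ha.2
  · simp only [coe_filter, Set.mem_ofPred_eq, mem_univ, true_and, coe_product,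
      Set.mem_prod] at hp
    exact Prod.ext (restrictBlock_glue_left h _ _ hp.1) (restrictBlock_glue_right h _ _)

theorem card_isNonCrossing_add_two (m : ℕ) :
    #{a : Fin (m + 2) → Fin (m + 2) | IsNonCrossing a} =
      ∑ i : Fin (m + 1), #{b : Fin (i + 1) → Fin (i + 1) | IsNonCrossing b} *
        #{c : Fin (m - i + 1) → Fin (m - i + 1) | IsNonCrossing c} := by
  rw [card_eq_sum_card_fiberwise (t := univ)
    (f := fun a => (⟨(a 0 : ℕ) - 1, by omega⟩ : Fin (m + 1))) (fun _ _ => mem_univ _)]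
  refine sum_congr rfl fun i _ => ?_
  rw [← card_isNonCrossing_of_apply_zero (by omega : (i : ℕ) + (m - i) + 2 = m + 2), filter_filter]
  congr 1
  refine filter_congr fun a _ => and_congr_right fun ha => ?_
  have := ha.lt_apply 0 (by simp)
  rw [Fin.lt_def] at this
  rw [Fin.ext_iff]
  simp only [Fin.zero_eta] at this ⊢
  omega

theorem card_isNonCrossing (m : ℕ) :
    #{a : Fin (m + 1) → Fin (m + 1) | IsNonCrossing a} = catalan m := by
  induction m using Nat.strong_induction_on with
  | _ m ih =>
  rcases m with _ | m
  · rw [catalan_zero]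
    decide
  · rw [card_isNonCrossing_add_two, catalan_succ]
    refine sum_congr rfl fun i _ => ?_
    rw [ih i (by omega), ih (m - i) (by omega)]

end Counting

section Arborescence

variable {n d : ℕ} {u : Fin n → EuclideanSpace ℝ (Fin d)} {c ω : EuclideanSpace ℝ (Fin d)}

theorem rho_eq_edgeSlope {g : Fin n → ℝ} (hg : ∀ i j, ⟪ω, u j - u i⟫ = g j - g i) :
    rho u c ω = edgeSlope (fun i => ⟪c, u i⟫) g := by
  funext i j
  rw [rho, edgeSlope, hg, inner_sub_right]

theorem rho_le_tau {i j : Fin n} (hij : i < j) : rho u c ω i j ≤ tau u c ω i := by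
  refine le_csSup (Set.Finite.bddAbove ?_) ⟨j, hij, rfl⟩
  exact (Set.finite_range (rho u c ω i)).subset fun _ ⟨k, _, hk⟩ => ⟨k, hk.symm⟩

theorem tau_eq_rho {i j : Fin n} (hij : i < j) (h : ∀ k, i < k → rho u c ω i k ≤ rho u c ω i j) :
    tau u c ω i = rho u c ω i j :=
  IsGreatest.csSup_eq ⟨⟨j, hij, rfl⟩, by rintro _ ⟨k, hik, rfl⟩; exact h k hik⟩

theorem generic_and_isArbo_iff {g : Fin n → ℝ} (hg : ∀ i j, ⟪ω, u j - u i⟫ = g j - g i)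
    {A : Fin n → Fin n} :
    Generic u c ω ∧ IsArbo u c ω A ↔
      (∀ i : Fin n, (i : ℕ) + 1 = n → A i = i) ∧ IsMaxSlope (fun i => ⟪c, u i⟫) g A := by
  simp only [IsMaxSlope, ← rho_eq_edgeSlope hg]
  constructor
  · rintro ⟨hgen, hlast, harb⟩
    refine ⟨hlast, fun i hi => ⟨(harb i hi).1, fun j hij hja => ?_⟩⟩
    rw [(harb i hi).2]
    exact (rho_le_tau hij).lt_of_ne fun heq => hja ((hgen i hi).unique ⟨hij, heq⟩ (harb i hi))
  · rintro ⟨hlast, hmax⟩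
    have htau : ∀ i hi, tau u c ω i = rho u c ω i (A i) := fun i hi =>
      tau_eq_rho (hmax i hi).1 fun k hik => by
        rcases eq_or_ne k (A i) with rfl | hk
        · exact le_rfl
        · exact ((hmax i hi).2 k hik hk).le
    refine ⟨fun i hi => ⟨A i, ⟨(hmax i hi).1, (htau i hi).symm⟩, fun j ⟨hij, hj⟩ => ?_⟩,
      hlast, fun i hi => ⟨(hmax i hi).1, (htau i hi).symm⟩⟩
    by_contra hne
    exact ((hmax i hi).2 j hij hne).ne (hj.trans (htau i hi))

end Arborescence

end MaxSlope

open MaxSlope in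
theorem card_arborescences_eq_catalan_general (m : ℕ)
    (u : Fin (m + 1) → EuclideanSpace ℝ (Fin m)) (hu : AffineIndependent ℝ u)
    (c : EuclideanSpace ℝ (Fin m))
    (hc : ∀ i j : Fin (m + 1), i < j → ⟪c, u i⟫ < ⟪c, u j⟫) :
    {A : Fin (m + 1) → Fin (m + 1) |
        ∃ ω : EuclideanSpace ℝ (Fin m), Generic u c ω ∧ IsArbo u c ω A}.ncard =
      catalan m := by
  have hf : StrictMono fun i => ⟪c, u i⟫ := fun i j => hc i j
  suffices {A | ∃ ω, Generic u c ω ∧ IsArbo u c ω A} = {a | IsNonCrossing a} by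
    rw [this, ← card_isNonCrossing, ← Set.ncard_coe_finset, Finset.coe_filter]
    simp
  ext A
  constructor
  · rintro ⟨ω, hA⟩
    obtain ⟨hlast, hmax⟩ := (generic_and_isArbo_iff fun i j => inner_sub_right _ _ _).1 hA
    exact hmax.isNonCrossing hf hlast
  · intro hA
    obtain ⟨g, hg⟩ := hA.exists_isMaxSlope hf
    obtain ⟨ω, hω⟩ := hu.exists_inner_sub_eq g
    exact ⟨ω, (generic_and_isArbo_iff hω).2 ⟨hA.apply_of_last, hg⟩⟩

/-- the number of max-slope arborescences of a full-dimensional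
simplex with generic objective direction is the Catalan number `catalan m`. -/
theorem card_arborescences_eq_catalan (m : ℕ) (hm : 1 ≤ m)
    (u : Fin (m + 1) → EuclideanSpace ℝ (Fin m)) (hu : AffineIndependent ℝ u)
    (c : EuclideanSpace ℝ (Fin m))
    (hc : ∀ i j : Fin (m + 1), i < j → ⟪c, u i⟫ < ⟪c, u j⟫) :
    {A : Fin (m + 1) → Fin (m + 1) |
        ∃ ω : EuclideanSpace ℝ (Fin m), Generic u c ω ∧ IsArbo u c ω A}.ncard =
      catalan m :=
  card_arborescences_eq_catalan_general m u hu c hc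
end
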